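/- arXiv:1301.1511 — 4 statements merged into one kernel-verified Lean document; each statement's English description precedes it below -/
import Mathlib

section
/- Let C be a category having coequalizers of reflexive pairs and let T be a monad on C whose underlying endofunctor preserves coequalizers of reflexive pairs. Then the forgetful functor U : Algebra(T) ⥤ C from the Eilenberg–Moore category of T-algebras creates coequalizers of reflexive pairs: given a reflexive pair of T-algebra maps whose image under U has a coequalizer in C, the coequalizer object carries a unique T-algebra structure making it the coequalizer in Algebra(T), and U preserves and reflects this coequalizer. -/
/-!
The forgetful functor `Algebra T ⥤ C` creates every colimit that `T` and `T ∘ T` preserve: the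
structure map of the colimit algebra is induced from `T` of the colimit, and the algebra laws are
checked on `T ∘ T` of it. A reflexive pair stays reflexive under any functor, so the images of
`f, g` under `U` and under `T ∘ U` are reflexive pairs whose coequalizers `T` preserves.
-/

open CategoryTheory CategoryTheory.Limits

universe v u

theorem CategoryTheory.IsReflexivePair.map {C D : Type*} [Category C] [Category D] (F : C ⥤ D)
    {A B : C} {f g : A ⟶ B} (hfg : IsReflexivePair f g) : IsReflexivePair (F.map f) (F.map g) :=
  IsReflexivePair.mk' (F.map (commonSection f g))
    (by rw [← F.map_comp, section_comp_left, F.map_id])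
    (by rw [← F.map_comp, section_comp_right, F.map_id])

theorem CategoryTheory.Limits.preservesColimit_of_isReflexivePair {C D : Type*} [Category C]
    [Category D] (F : C ⥤ D)
    (hF : ∀ ⦃A B : C⦄ (f g : A ⟶ B), IsReflexivePair f g → PreservesColimit (parallelPair f g) F)
    {K : WalkingParallelPair ⥤ C} (hK : IsReflexivePair (K.map .left) (K.map .right)) :
    PreservesColimit K F :=
  have := hF _ _ hK
  preservesColimit_of_iso_diagram F (diagramIsoParallelPair K).symm

theorem monad_forget_creates_reflexive_coequalizers_general
    {C : Type u} [Category.{v} C] (T : Monad C)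
    (hT : ∀ ⦃A B : C⦄ (f g : A ⟶ B), IsReflexivePair f g →
      PreservesColimit (parallelPair f g) (T : C ⥤ C))
    {X Y : T.Algebra} (f g : X ⟶ Y) (hfg : IsReflexivePair f g) :
    Nonempty (CreatesColimit (parallelPair f g) T.forget) := by
  have hU : IsReflexivePair (T.forget.map f) (T.forget.map g) := hfg.map T.forget
  have : PreservesColimit (parallelPair f g ⋙ T.forget) (T : C ⥤ C) :=
    preservesColimit_of_isReflexivePair _ hT hU
  have : PreservesColimit ((parallelPair f g ⋙ T.forget) ⋙ (T : C ⥤ C)) (T : C ⥤ C) :=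
    preservesColimit_of_isReflexivePair _ hT (hU.map (T : C ⥤ C))
  exact ⟨Monad.forgetCreatesColimit _⟩

/-- Let `C` have coequalizers of reflexive pairs and let `T` be a monad on `C` whose
underlying endofunctor preserves coequalizers of reflexive pairs.  Then the forgetful
functor `U : Algebra T ⥤ C` from the Eilenberg–Moore category of `T`-algebras creates
coequalizers of reflexive pairs. -/
theorem monad_forget_creates_reflexive_coequalizers
    {C : Type u} [Category.{v} C] [HasReflexiveCoequalizers C] (T : Monad C)
    (hT : ∀ ⦃A B : C⦄ (f g : A ⟶ B), IsReflexivePair f g →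
      PreservesColimit (parallelPair f g) (T : C ⥤ C))
    {X Y : T.Algebra} (f g : X ⟶ Y) (hfg : IsReflexivePair f g) :
    Nonempty (CreatesColimit (parallelPair f g) T.forget) :=
  monad_forget_creates_reflexive_coequalizers_general T hT f g hfg
end

section
/- Let C be a cocomplete category and let T be a monad on C whose underlying endofunctor preserves coequalizers of reflexive pairs. Then the Eilenberg–Moore category Algebra(T) of T-algebras is cocomplete (has all small colimits). -/
open CategoryTheory CategoryTheory.Limits

universe v u

/-!
Since `T` preserves reflexive coequalizers, the forgetful functor `U : T.Algebra ⥤ C` creates them.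
Hence `T.Algebra`, and pointwise `J ⥤ T.Algebra`, has reflexive coequalizers, and by Beck's theorem
postcomposition with `U`, `(J ⥤ T.Algebra) ⥤ (J ⥤ C)`, is monadic. The adjoint lifting theorem,
applied to the square `U ⋙ const ≅ const ⋙ (- ⋙ U)`, lifts the left adjoint `colim` of `const` on
`C` to one on `T.Algebra`: the colimit of `D` is the reflexive coequalizer of
`F (colim (D ⋙ U ⋙ F ⋙ U)) ⇉ F (colim (D ⋙ U))`.
-/

namespace CategoryTheory

section

variable {C : Type*} [Category.{v} C] {D : Type*} [Category.{v} D]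

lemma Monad.preservesColimitOfIsReflexivePair_iff (G : C ⥤ D) :
    Monad.PreservesColimitOfIsReflexivePair G ↔
      PreservesColimitsOfShape WalkingReflexivePair G := by
  constructor
  · intro _
    refine ⟨fun {K} => ?_⟩
    have : PreservesColimit (parallelPair
        ((WalkingParallelPair.inclusionWalkingReflexivePair ⋙ K).map .left)
        ((WalkingParallelPair.inclusionWalkingReflexivePair ⋙ K).map .right)) G :=
      Monad.PreservesColimitOfIsReflexivePair.out (K.map .left) (K.map .right)
    have : PreservesColimit (WalkingParallelPair.inclusionWalkingReflexivePair ⋙ K) G :=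
      preservesColimit_of_iso_diagram G (diagramIsoParallelPair _).symm
    exact Functor.Final.preservesColimit_of_comp WalkingParallelPair.inclusionWalkingReflexivePair
  · intro _
    refine ⟨fun _ _ f g _ => ?_⟩
    exact preservesColimit_of_iso_diagram G
      (inclusionWalkingReflexivePairOfIsReflexivePairIso f g)

instance hasReflexiveCoequalizers_functorCategory (J : Type*) [Category* J]
    [HasReflexiveCoequalizers D] :
    HasReflexiveCoequalizers (J ⥤ D) :=
  have := hasReflexiveCoequalizers_iff.2 ‹HasReflexiveCoequalizers D›
  hasReflexiveCoequalizers_iff.1 inferInstance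

lemma Monad.hasReflexiveCoequalizers_algebra [HasReflexiveCoequalizers C] (T : Monad C)
    [PreservesColimitsOfShape WalkingReflexivePair (T : C ⥤ C)] :
    HasReflexiveCoequalizers T.Algebra :=
  have := hasReflexiveCoequalizers_iff.2 ‹HasReflexiveCoequalizers C›
  hasReflexiveCoequalizers_iff.1
    (hasColimitsOfShape_of_hasColimitsOfShape_createsColimitsOfShape (Monad.forget T))

noncomputable abbrev monadicRightAdjointWhiskeringRight (J : Type*) [Category* J]
    {F : C ⥤ D} {G : D ⥤ C} (adj : F ⊣ G) [HasReflexiveCoequalizers D]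
    [G.ReflectsIsomorphisms] [PreservesColimitsOfShape WalkingReflexivePair G] :
    MonadicRightAdjoint ((Functor.whiskeringRight J D C).obj G) :=
  have := hasReflexiveCoequalizers_iff.2 ‹HasReflexiveCoequalizers D›
  have := (Monad.preservesColimitOfIsReflexivePair_iff ((Functor.whiskeringRight J D C).obj G)).2
    inferInstance
  Monad.monadicOfHasPreservesReflexiveCoequalizersOfReflectsIsomorphisms (adj.whiskerRight J)

end

end CategoryTheory

/-- Let `C` be a cocomplete category and let `T` be a monad on `C` whose underlying
endofunctor preserves coequalizers of reflexive pairs.  Then the Eilenberg–Moore category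
of `T`-algebras is cocomplete. -/
theorem monad_algebra_cocomplete
    {C : Type u} [Category.{v} C] [HasColimits C] (T : Monad C)
    (hT : ∀ ⦃A B : C⦄ (f g : A ⟶ B), IsReflexivePair f g →
      PreservesColimit (parallelPair f g) (T : C ⥤ C)) :
    HasColimits T.Algebra := by
  have := (Monad.preservesColimitOfIsReflexivePair_iff (T : C ⥤ C)).1 ⟨hT⟩
  have := Monad.hasReflexiveCoequalizers_algebra T
  refine ⟨fun J _ => hasColimitsOfShape_iff_isRightAdjoint_const.2 ?_⟩
  have : (Functor.const J : C ⥤ J ⥤ C).IsRightAdjoint :=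
    hasColimitsOfShape_iff_isRightAdjoint_const.1 inferInstance
  let := monadicRightAdjointWhiskeringRight J T.adj
  exact isRightAdjoint_square_lift_monadic (Functor.const J)
    ((Functor.whiskeringRight J _ _).obj (Monad.forget T)) (Monad.forget T) (Functor.const J)
    (Functor.compConstIso J (Monad.forget T))
end

section
/- For all natural numbers n and m, if σ₁, σ₂ : Fin(n+m+1) → Fin(n+1) are two distinct surjective monotone maps (distinct epimorphisms [n+m] ⟶ [n] in the simplex category), then Γ₀(σ₁) ≠ Γ₀(σ₂), where for a surjective monotone map σ the set Γ₀(σ) consists of all monotone maps τ : Fin(n+1) → Fin(n+m+1) with σ ∘ τ = id and τ(0) = 0. In fact, if σ₁(j) < σ₂(j) at the minimal index j where they differ, then the map τ₂ defined by τ₂(i) = min σ₂⁻¹(i) lies in Γ₀(σ₂) but is not a section of σ₁. -/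
/-- Core lemma: if `σ₁` and `σ₂` agree below `j` and `σ₁ j < σ₂ j`, then any `τ₂`
sending `i` to the minimum of `σ₂⁻¹ {i}` is a monotone section of `σ₂` fixing `0`
but is not a section of `σ₁`. -/
lemma aux_core (n m : ℕ) (σ₁ σ₂ : Fin (n + m + 1) →o Fin (n + 1))
    (j : Fin (n + m + 1)) (hmin : ∀ i : Fin (n + m + 1), i < j → σ₁ i = σ₂ i)
    (hlt : σ₁ j < σ₂ j) (τ₂ : Fin (n + 1) → Fin (n + m + 1))
    (hτ : ∀ i, σ₂ (τ₂ i) = i ∧ ∀ x, σ₂ x = i → τ₂ i ≤ x) :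
    Monotone τ₂ ∧ ⇑σ₂ ∘ τ₂ = id ∧ τ₂ 0 = 0 ∧ ⇑σ₁ ∘ τ₂ ≠ id := by
  have hsec : ∀ i, σ₂ (τ₂ i) = i := fun i => (hτ i).1
  have hmono : Monotone τ₂ := by
    intro a b hab
    by_contra h
    push_neg at h
    have hba : b ≤ a := by
      have := σ₂.monotone h.le
      rw [hsec a, hsec b] at this
      exact this
    have hab' : a = b := le_antisymm hab hba
    subst hab'
    exact absurd ((hτ a).2 (τ₂ a) (hsec a)) (not_le.mpr h)
  refine ⟨hmono, funext hsec, ?_, ?_⟩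
  · have h0 : σ₂ 0 = 0 := by
      have h1 : σ₂ 0 ≤ σ₂ (τ₂ 0) := σ₂.monotone (Fin.zero_le _)
      rw [hsec 0] at h1
      exact le_antisymm h1 (Fin.zero_le _)
    exact le_antisymm ((hτ 0).2 0 h0) (Fin.zero_le _)
  · -- not a section of σ₁ : at k = σ₂ j we have τ₂ k = j and σ₁ j < k
    intro hid
    set k : Fin (n + 1) := σ₂ j with hk
    have hτk : τ₂ k ≤ j := (hτ k).2 j rfl
    have hτkj : τ₂ k = j := by
      rcases lt_or_eq_of_le hτk with h | h
      · have h1 : σ₁ (τ₂ k) = σ₂ (τ₂ k) := hmin _ h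
        have h2 : σ₁ (τ₂ k) = k := by rw [h1, hsec]
        have h3 : k ≤ σ₁ j := h2 ▸ σ₁.monotone hτk
        exact absurd (lt_of_lt_of_le hlt h3) (lt_irrefl _)
      · exact h
    have : σ₁ (τ₂ k) = k := congrFun hid k
    rw [hτkj] at this
    rw [this] at hlt
    exact absurd hlt (lt_irrefl _)

/-- The set of monotone sections fixing 0 differs when there's a minimal index
where `σ₁ j < σ₂ j`. -/
lemma aux_ne (n m : ℕ) (σ₁ σ₂ : Fin (n + m + 1) →o Fin (n + 1))
    (hs₂ : Function.Surjective σ₂)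
    (j : Fin (n + m + 1)) (hmin : ∀ i : Fin (n + m + 1), i < j → σ₁ i = σ₂ i)
    (hlt : σ₁ j < σ₂ j) :
    ({τ : Fin (n + 1) →o Fin (n + m + 1) | ⇑σ₁ ∘ ⇑τ = id ∧ τ 0 = 0} ≠
      {τ : Fin (n + 1) →o Fin (n + m + 1) | ⇑σ₂ ∘ ⇑τ = id ∧ τ 0 = 0}) := by
  classical
  have hne' : ∀ i : Fin (n + 1), (Finset.univ.filter (fun x => σ₂ x = i)).Nonempty := by
    intro i
    obtain ⟨x, hx⟩ := hs₂ i
    exact ⟨x, by simp [hx]⟩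
  set τ₂ : Fin (n + 1) → Fin (n + m + 1) :=
    fun i => (Finset.univ.filter (fun x => σ₂ x = i)).min' (hne' i) with hτ₂
  have hτ : ∀ i, σ₂ (τ₂ i) = i ∧ ∀ x, σ₂ x = i → τ₂ i ≤ x := by
    intro i
    constructor
    · have := Finset.min'_mem _ (hne' i)
      simpa using this
    · intro x hx
      exact Finset.min'_le _ x (by simp [hx])
  obtain ⟨hmono, hsec, h0, hnsec⟩ := aux_core n m σ₁ σ₂ j hmin hlt τ₂ hτ
  intro h
  have hmem : (⟨τ₂, hmono⟩ : Fin (n + 1) →o Fin (n + m + 1)) ∈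
      {τ : Fin (n + 1) →o Fin (n + m + 1) | ⇑σ₂ ∘ ⇑τ = id ∧ τ 0 = 0} := ⟨hsec, h0⟩
  rw [← h] at hmem
  exact hnsec hmem.1

/-- **(EZ2) for `Δ₀`.**  If `σ₁ ≠ σ₂ : Fin (n+m+1) → Fin (n+1)` are two distinct surjective
monotone maps, then the sets `Γ₀(σ₁)` and `Γ₀(σ₂)` of monotone sections fixing `0` are
distinct.  In fact, if `σ₁ j < σ₂ j` at the minimal index `j` where the two maps differ, then
the map `τ₂` defined by `τ₂ i = min σ₂⁻¹ {i}` lies in `Γ₀(σ₂)` but is not a section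
of `σ₁`. -/
theorem sections_distinct_of_distinct_surjective_monotone (n m : ℕ)
    (σ₁ σ₂ : Fin (n + m + 1) →o Fin (n + 1))
    (hs₁ : Function.Surjective σ₁) (hs₂ : Function.Surjective σ₂)
    (hne : σ₁ ≠ σ₂) :
    ({τ : Fin (n + 1) →o Fin (n + m + 1) | ⇑σ₁ ∘ ⇑τ = id ∧ τ 0 = 0} ≠
      {τ : Fin (n + 1) →o Fin (n + m + 1) | ⇑σ₂ ∘ ⇑τ = id ∧ τ 0 = 0}) ∧
    ∀ j : Fin (n + m + 1), (∀ i : Fin (n + m + 1), i < j → σ₁ i = σ₂ i) → σ₁ j < σ₂ j →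
      ∀ τ₂ : Fin (n + 1) → Fin (n + m + 1),
        (∀ i, σ₂ (τ₂ i) = i ∧ ∀ x, σ₂ x = i → τ₂ i ≤ x) →
        Monotone τ₂ ∧ ⇑σ₂ ∘ τ₂ = id ∧ τ₂ 0 = 0 ∧ ⇑σ₁ ∘ τ₂ ≠ id := by
  classical
  constructor
  · -- find minimal index where they differ
    have hne' : (Finset.univ.filter (fun i => σ₁ i ≠ σ₂ i)).Nonempty := by
      by_contra h
      rw [Finset.not_nonempty_iff_eq_empty] at h
      apply hne
      ext i
      by_contra hi
      have : i ∈ Finset.univ.filter (fun i => σ₁ i ≠ σ₂ i) := by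
        simp only [Finset.mem_filter, Finset.mem_univ, true_and]
        exact fun he => hi (congrArg Fin.val he)
      simp [h] at this
    set j := (Finset.univ.filter (fun i => σ₁ i ≠ σ₂ i)).min' hne' with hj
    have hjmem : σ₁ j ≠ σ₂ j := by
      have := Finset.min'_mem _ hne'
      simpa using this
    have hmin : ∀ i : Fin (n + m + 1), i < j → σ₁ i = σ₂ i := by
      intro i hi
      by_contra h
      have : j ≤ i := Finset.min'_le _ i (by simp [h])
      exact absurd hi (not_lt.mpr this)
    rcases lt_or_gt_of_ne hjmem with h | h
    · exact aux_ne n m σ₁ σ₂ hs₂ j hmin h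
    · exact (aux_ne n m σ₂ σ₁ hs₁ j (fun i hi => (hmin i hi).symm) h).symm
  · intro j hmin hlt τ₂ hτ
    exact aux_core n m σ₁ σ₂ j hmin hlt τ₂ hτ
end

section
/- Let Δ₀ denote the subcategory of the simplex category Δ with all objects and those monotone maps f with f(0) = 0 (note that every epimorphism of Δ lies in Δ₀). Then for every functor X : Δ₀ᵒᵖ ⥤ SSet into simplicial sets and every n ≥ 0, the n-th latching map Lₙ(X) ⟶ X([n]) is a monomorphism of simplicial sets. In particular, every Δ₀ᵒᵖ-shaped diagram of simplicial sets is Reedy cofibrant with respect to the Kan–Quillen model structure on simplicial sets, in which the cofibrations are the monomorphisms. -/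
open CategoryTheory CategoryTheory.Limits Opposite

/-- The subcategory `Δ₀` of the simplex category `Δ` with the same objects and those
monotone maps `f` with `f 0 = 0`. -/
structure Delta0 : Type where
  toObj : SimplexCategory

instance : Category.{0} Delta0 where
  Hom a b := { f : a.toObj ⟶ b.toObj // f.toOrderHom 0 = 0 }
  id a := ⟨𝟙 a.toObj, rfl⟩
  comp f g := ⟨f.1 ≫ g.1, by
    simp only [SimplexCategory.comp_toOrderHom, OrderHom.comp_coe, Function.comp_apply, f.2, g.2]⟩

/-- The index category for the `n`-th latching object: its objects are the non-identity
epimorphisms `α : [n] ↠ [k]` of `Δ` (all of which lie in `Δ₀`), and a morphism `α ⟶ α′`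
is an epimorphism `φ : [k′] ↠ [k]` with `α′ ≫ φ = α` (i.e. the opposite of the category
whose morphisms `α → α′` are the epimorphisms `φ` with `φ ∘ α = α′`, so that the diagram
below is covariant). -/
structure LatchingIndex (n : Delta0) : Type where
  k : Delta0
  π : n ⟶ k
  epi : Epi π.1
  not_identity : ¬ IsIso π.1

instance (n : Delta0) : Category.{0} (LatchingIndex n) where
  Hom a b := { φ : b.k ⟶ a.k // b.π ≫ φ = a.π ∧ Epi φ.1 }
  id a := ⟨𝟙 a.k, by simp, show Epi (𝟙 a.k.toObj) from inferInstance⟩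
  comp {a b c} f g := ⟨g.1 ≫ f.1, by
      rw [← Category.assoc, g.2.1, f.2.1],
    by
      haveI := g.2.2
      haveI := f.2.2
      exact epi_comp _ _⟩

/-- The latching diagram of a `Δ₀ᵒᵖ`-shaped diagram of simplicial sets at `[n]`,
sending a non-identity epimorphism `α : [n] ↠ [k]` to `X [k]`. -/
def latchingDiagram (X : Delta0ᵒᵖ ⥤ SSet) (n : Delta0) : LatchingIndex n ⥤ SSet where
  obj a := X.obj (op a.k)
  map f := X.map f.1.op
  map_id a := by
    show X.map (𝟙 a.k).op = _
    rw [op_id, X.map_id]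
  map_comp {a b c} f g := by
    show X.map (g.1 ≫ f.1).op = _
    rw [op_comp, X.map_comp]

/-- The cocone on the latching diagram with vertex `X [n]`, whose components are the maps
`X α : X [k] ⟶ X [n]`; the canonical map out of the colimit is the latching map. -/
def latchingCocone (X : Delta0ᵒᵖ ⥤ SSet) (n : Delta0) : Cocone (latchingDiagram X n) where
  pt := X.obj (op n)
  ι :=
    { app := fun a => X.map a.π.op
      naturality := fun a b f => by
        dsimp [latchingDiagram]
        rw [← X.map_comp, ← op_comp, f.2.1, Category.comp_id] }

/-!
Degreewise, this is an Eilenberg–Zilber lemma for presheaves `Y` of sets on `Δ₀`: every element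
of `Y [k]` is `Y e w` for a unique epimorphism `e` and a unique nondegenerate `w`. As for `Δ`,
uniqueness comes from pulling back along sections of surjections. In `Δ₀` a section has to fix
`0`, but that is the only constraint: it can pass through any point that is not sent to `0`,
and this is enough. If two elements of the latching diagram have the same image in `Y [n]`, both
are degeneracies of the nondegenerate element underlying that image, so they are identified in
the colimit.
-/

universe u v w

open SimplexCategory

lemma StrictMono.of_rightInverse {α β : Type*} [LinearOrder α] [Preorder β] {f : α → β}
    {s : β → α} (hf : Monotone f) (hs : Function.RightInverse s f) : StrictMono s :=
  fun a b hab => lt_of_not_ge fun h => (hab.trans_le (by simpa only [hs _] using hf h)).false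

lemma SimplexCategory.apply_zero_of_epi {a b : SimplexCategory} (f : a ⟶ b) [hf : Epi f] :
    f.toOrderHom 0 = 0 := by
  obtain ⟨i, hi⟩ := epi_iff_surjective.mp hf 0
  exact le_antisymm (hi ▸ f.toOrderHom.monotone (Fin.zero_le i)) (Fin.zero_le _)

lemma SimplexCategory.len_lt_of_epi_of_not_isIso {a b : SimplexCategory} (f : a ⟶ b) [Epi f]
    (hf : ¬ IsIso f) : b.len < a.len :=
  (len_le_of_epi f).lt_of_ne fun h => hf ((isIso_iff_of_epi f).mpr h.symm)

lemma mono_colimit_desc_of_exists_span {J : Type v} [Category.{w} J] {C : Type*} [Category C]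
    [HasColimitsOfShape J (Type u)] {F : J ⥤ C ⥤ Type u} [HasColimit F] (s : Cocone F)
    (h : ∀ (m : C) (a b : J) (x : (F.obj a).obj m) (y : (F.obj b).obj m),
      (s.ι.app a).app m x = (s.ι.app b).app m y →
        ∃ (c : J) (f : c ⟶ a) (g : c ⟶ b) (z : (F.obj c).obj m),
          (F.map f).app m z = x ∧ (F.map g).app m z = y) :
    Mono (colimit.desc F s) := by
  rw [NatTrans.mono_iff_mono_app]
  intro m
  rw [CategoryTheory.mono_iff_injective]
  have hc := isColimitOfPreserves ((evaluation C (Type u)).obj m) (colimit.isColimit F)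
  intro p q hpq
  obtain ⟨a, x, rfl⟩ := Types.jointly_surjective _ hc p
  obtain ⟨b, y, rfl⟩ := Types.jointly_surjective _ hc q
  have hdesc (j : J) (x : (F.obj j).obj m) :
      (colimit.desc F s).app m ((colimit.ι F j).app m x) = (s.ι.app j).app m x :=
    ConcreteCategory.congr_hom (colimit.ι_desc_app F s j m) x
  have hw {j j' : J} (f : j' ⟶ j) (z : (F.obj j').obj m) :
      (colimit.ι F j).app m ((F.map f).app m z) = (colimit.ι F j').app m z :=
    ConcreteCategory.congr_hom (NatTrans.congr_app (colimit.w F f) m) z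
  obtain ⟨c, f, g, z, rfl, rfl⟩ := h m a b x y ((hdesc a x).symm.trans (hpq.trans (hdesc b y)))
  exact (hw f z).trans (hw g z).symm

namespace Delta0

variable {a b : Delta0}

@[ext]
lemma hom_ext {f g : a ⟶ b} (h : f.1 = g.1) : f = g := Subtype.ext h

lemma ext (h : a.toObj = b.toObj) : a = b := by
  cases a; cases b; cases h; rfl

lemma exists_epi_mono_factorization (f : a ⟶ b) :
    ∃ (c : Delta0) (e : a ⟶ c) (m : c ⟶ b), Epi e.1 ∧ Mono m.1 ∧ e ≫ m = f := by
  have he : (factorThruImage f.1).toOrderHom 0 = 0 := apply_zero_of_epi _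
  have hm : (image.ι f.1).toOrderHom 0 = 0 := by
    simpa only [← image.fac f.1, comp_toOrderHom, OrderHom.comp_coe, Function.comp_apply, he]
      using f.2
  exact ⟨⟨image f.1⟩, ⟨_, he⟩, ⟨_, hm⟩, inferInstanceAs (Epi (factorThruImage f.1)),
    inferInstanceAs (Mono (image.ι f.1)), hom_ext (image.fac f.1)⟩

lemma exists_section_apply_eq (f : a ⟶ b) [hf : Epi f.1] (i : Fin (a.toObj.len + 1))
    (hi : f.1.toOrderHom i = 0 → i = 0) :
    ∃ s : b ⟶ a, s ≫ f = 𝟙 b ∧ s.1.toOrderHom (f.1.toOrderHom i) = i := by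
  have hsurj := epi_iff_surjective.mp hf
  let s₀ := Function.update (Function.update (Function.surjInv hsurj) (f.1.toOrderHom i) i) 0 0
  have hs₀ : Function.RightInverse s₀ f.1.toOrderHom := by
    intro j
    by_cases h0 : j = 0
    · simp only [s₀, h0, Function.update_self, f.2]
    by_cases hj : j = f.1.toOrderHom i
    · simp only [s₀, hj, Function.update_of_ne (hj ▸ h0), Function.update_self]
    · simp only [s₀, Function.update_of_ne h0, Function.update_of_ne hj,
        Function.surjInv_eq hsurj]
  refine ⟨⟨Hom.mk ⟨s₀, (StrictMono.of_rightInverse f.1.toOrderHom.monotone hs₀).monotone⟩,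
    show s₀ 0 = 0 from Function.update_self _ _ _⟩,
    hom_ext (by ext j : 3; exact hs₀ j), ?_⟩
  by_cases h0 : f.1.toOrderHom i = 0
  · obtain rfl := hi h0
    exact (congrArg s₀ h0).trans (Function.update_self _ _ _)
  · simp [s₀, h0]

variable (Y : Delta0ᵒᵖ ⥤ Type u)

def IsNondegenerate {a : Delta0} (x : Y.obj (op a)) : Prop :=
  ∀ (b : Delta0) (e : a ⟶ b) (w : Y.obj (op b)), Epi e.1 → Y.map e.op w = x → IsIso e.1

variable {Y}

lemma IsNondegenerate.mono {a b : Delta0} {x : Y.obj (op a)} (hx : IsNondegenerate Y x)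
    (f : a ⟶ b) {w : Y.obj (op b)} (hw : Y.map f.op w = x) : Mono f.1 := by
  obtain ⟨c, e, m, he, hm, rfl⟩ := exists_epi_mono_factorization f
  have : IsIso e.1 := hx c e (Y.map m.op w) he (by rwa [← Functor.map_comp_apply])
  exact mono_comp e.1 m.1

lemma exists_nondegenerate {a : Delta0} (x : Y.obj (op a)) :
    ∃ (b : Delta0) (e : a ⟶ b) (w : Y.obj (op b)),
      Epi e.1 ∧ IsNondegenerate Y w ∧ Y.map e.op w = x := by
  obtain ⟨N, h⟩ : ∃ N, a.toObj.len = N := ⟨_, rfl⟩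
  induction N using Nat.strong_induction_on generalizing a with
  | _ N ih =>
    by_cases hx : IsNondegenerate Y x
    · exact ⟨a, 𝟙 a, x, inferInstanceAs (Epi (𝟙 a.toObj)), hx, by simp⟩
    simp only [IsNondegenerate, not_forall] at hx
    obtain ⟨b, e, w, he, rfl, hne⟩ := hx
    obtain ⟨c, e', w', he', hw', rfl⟩ := ih _ (h ▸ len_lt_of_epi_of_not_isIso e.1 hne) w rfl
    exact ⟨c, e ≫ e', w', epi_comp e.1 e'.1, hw', by simp⟩

section Uniqueness

variable {n a b : Delta0} {α : n ⟶ a} {β : n ⟶ b} {x : Y.obj (op a)} {y : Y.obj (op b)}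

lemma mono_section_comp (hy : IsNondegenerate Y y) (h : Y.map α.op x = Y.map β.op y)
    {s : b ⟶ n} (hs : s ≫ β = 𝟙 b) : Mono (s ≫ α).1 :=
  hy.mono (s ≫ α) (by rw [op_comp, Functor.map_comp_apply, h,
    ← Functor.map_comp_apply, ← op_comp, hs, op_id, Functor.map_id_apply])

lemma eq_of_nondegenerate [Epi α.1] [Epi β.1] (hx : IsNondegenerate Y x)
    (hy : IsNondegenerate Y y) (h : Y.map α.op x = Y.map β.op y) : a = b := by
  obtain ⟨s, hs, -⟩ := exists_section_apply_eq β 0 fun _ => rfl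
  obtain ⟨t, ht, -⟩ := exists_section_apply_eq α 0 fun _ => rfl
  have := mono_section_comp hy h hs
  have := mono_section_comp hx h.symm ht
  exact ext (SimplexCategory.ext
    (le_antisymm (len_le_of_mono (t ≫ β).1) (len_le_of_mono (s ≫ α).1)))

end Uniqueness

section SameTarget

variable {n a : Delta0} {α β : n ⟶ a} {x y : Y.obj (op a)}

lemma section_comp_eq_id (hy : IsNondegenerate Y y) (h : Y.map α.op x = Y.map β.op y)
    {s : a ⟶ n} (hs : s ≫ β = 𝟙 a) : s ≫ α = 𝟙 a :=
  have := mono_section_comp hy h hs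
  hom_ext (eq_id_of_mono _)

lemma apply_eq_of_apply_ne_zero [Epi β.1] (hy : IsNondegenerate Y y)
    (h : Y.map α.op x = Y.map β.op y) {i : Fin (n.toObj.len + 1)} (hi : β.1.toOrderHom i ≠ 0) :
    α.1.toOrderHom i = β.1.toOrderHom i := by
  obtain ⟨s, hs, hsi⟩ := exists_section_apply_eq β i fun h0 => absurd h0 hi
  have := congrArg (fun f : a ⟶ a => f.1.toOrderHom (β.1.toOrderHom i))
    (section_comp_eq_id hy h hs)
  change α.1.toOrderHom (s.1.toOrderHom (β.1.toOrderHom i)) = β.1.toOrderHom i at this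
  rwa [hsi] at this

/-- Sections in `Δ₀` cannot move `0`, so a point sent to `0` by `β` but not by `α` is handled by
exchanging the roles of `α` and `β`. -/
lemma eq_and_eq_of_nondegenerate [Epi α.1] [Epi β.1] (hx : IsNondegenerate Y x)
    (hy : IsNondegenerate Y y) (h : Y.map α.op x = Y.map β.op y) : α = β ∧ x = y := by
  constructor
  · ext i : 4
    by_cases hβ : β.1.toOrderHom i = 0
    · by_cases hα : α.1.toOrderHom i = 0
      · rw [hα, hβ]
      · exact (apply_eq_of_apply_ne_zero hx h.symm hα).symm
    · exact apply_eq_of_apply_ne_zero hy h hβ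
  · obtain ⟨s, hs, -⟩ := exists_section_apply_eq β 0 fun _ => rfl
    have hsα := section_comp_eq_id hy h hs
    rw [← Functor.map_id_apply Y _ x, ← op_id, ← hsα, op_comp,
      Functor.map_comp_apply, h, ← Functor.map_comp_apply, ← op_comp, hs, op_id,
      Functor.map_id_apply]

end SameTarget

end Delta0

namespace LatchingIndex

open Delta0

variable {n : Delta0}

lemma len_lt (a : LatchingIndex n) : a.k.toObj.len < n.toObj.len :=
  have := a.epi
  len_lt_of_epi_of_not_isIso a.π.1 a.not_identity

def compEpi (a : LatchingIndex n) {b : Delta0} (e : a.k ⟶ b) [Epi e.1] : LatchingIndex n where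
  k := b
  π := a.π ≫ e
  epi := have := a.epi; epi_comp a.π.1 e.1
  not_identity h := by
    have := a.len_lt
    have := len_le_of_epi e.1
    have := len_eq_of_isIso (a.π ≫ e).1
    omega

def compEpiHom (a : LatchingIndex n) {b : Delta0} (e : a.k ⟶ b) [he : Epi e.1] :
    a.compEpi e ⟶ a :=
  ⟨e, rfl, he⟩

lemma exists_span (Y : Delta0ᵒᵖ ⥤ Type u) {a b : LatchingIndex n} {x : Y.obj (op a.k)}
    {y : Y.obj (op b.k)} (h : Y.map a.π.op x = Y.map b.π.op y) :
    ∃ (c : LatchingIndex n) (f : c ⟶ a) (g : c ⟶ b) (z : Y.obj (op c.k)),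
      Y.map f.1.op z = x ∧ Y.map g.1.op z = y := by
  obtain ⟨a', e, z, he, hz, rfl⟩ := exists_nondegenerate x
  obtain ⟨b', e', z', he', hz', rfl⟩ := exists_nondegenerate y
  rw [← Functor.map_comp_apply, ← Functor.map_comp_apply, ← op_comp, ← op_comp] at h
  have : Epi (a.π ≫ e).1 := (a.compEpi e).epi
  have : Epi (b.π ≫ e').1 := (b.compEpi e').epi
  obtain rfl := eq_of_nondegenerate hz hz' h
  obtain ⟨hπ, rfl⟩ := eq_and_eq_of_nondegenerate hz hz' h
  exact ⟨a.compEpi e, a.compEpiHom e, ⟨e', hπ.symm, he'⟩, z, rfl, rfl⟩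

end LatchingIndex

/-- For every functor `X : Δ₀ᵒᵖ ⥤ SSet` and every `n`, the `n`-th latching map
`Lₙ(X) ⟶ X [n]` is a monomorphism of simplicial sets; in particular (since the
cofibrations of the Kan–Quillen model structure are exactly the monomorphisms) every
`Δ₀ᵒᵖ`-shaped diagram of simplicial sets is Reedy cofibrant. -/
theorem latchingMap_mono (X : Delta0ᵒᵖ ⥤ SSet) (n : Delta0) :
    Mono (colimit.desc (latchingDiagram X n) (latchingCocone X n)) :=
  mono_colimit_desc_of_exists_span _ fun m _ _ _ _ h =>
    LatchingIndex.exists_span (X ⋙ (evaluation _ _).obj m) h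
end
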